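/- arXiv:1612.09142 — 4 statements merged into one kernel-verified Lean document; each statement's English description precedes it below -/
import Mathlib

section
/- Let σ be a finite positive Borel measure on ℝ such that σ([ω−r, ω+r]) ≤ C r^γ for all ω ∈ ℝ and all 0 < r ≤ r₀, for some constants C > 0, γ ∈ (0,1], r₀ > 0. Then there exists a constant C' > 0 such that for every y ∈ ℝ and every R ≥ 1, ∫_{y−R}^{y+R} |σ̂(ζ)|² dζ ≤ C' R^{1−γ}, where σ̂(ζ) = ∫ e^{2πiωζ} dσ(ω). -/
/-!
Weight the interval by the Gaussian `w(ζ) = exp (-((ζ - y) / R) ^ 2)`, which is at least `e⁻¹`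
on it. Expanding `|σ̂(ζ)|² = ∬ e^{2πi(ω - ω')ζ} dσ dσ` and integrating in `ζ` first turns
`∫ |σ̂|² w` into `∬ ŵ(ω - ω') dσ dσ`, and `|ŵ(s)| = √π R e^{-(πRs)²}`. Splitting the line into the
shells `k ≤ πR|ω - ω'| < k + 1`, the Hölder bound (extended to all radii since `σ` is finite) gives
`∫ e^{-(πR(ω - ω'))²} dσ(ω) ≲ R^{-γ}`, hence the total bound `R · R^{-γ}`.
-/

open MeasureTheory Real Set

lemma exists_measure_Icc_le_mul_rpow (σ : Measure ℝ) [IsFiniteMeasure σ] {C γ r₀ : ℝ}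
    (hC : 0 ≤ C) (hγ : 0 ≤ γ) (hr₀ : 0 < r₀)
    (hreg : ∀ x r, 0 < r → r ≤ r₀ → σ (Icc (x - r) (x + r)) ≤ ENNReal.ofReal (C * r ^ γ)) :
    ∃ C₂, 0 ≤ C₂ ∧ ∀ x r, 0 < r → σ (Icc (x - r) (x + r)) ≤ ENNReal.ofReal (C₂ * r ^ γ) := by
  have hr₀γ : 0 < r₀ ^ γ := rpow_pos_of_pos hr₀ γ
  refine ⟨C + σ.real univ / r₀ ^ γ, by positivity, fun x r hr => ?_⟩
  rcases le_or_gt r r₀ with hle | hlt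
  · refine (hreg x r hr hle).trans (ENNReal.ofReal_le_ofReal ?_)
    have : 0 ≤ σ.real univ / r₀ ^ γ * r ^ γ := by positivity
    nlinarith
  · calc σ (Icc (x - r) (x + r)) ≤ σ univ := measure_mono (subset_univ _)
      _ = ENNReal.ofReal (σ.real univ / r₀ ^ γ * r₀ ^ γ) := by
        rw [div_mul_cancel₀ _ hr₀γ.ne', ofReal_measureReal]
      _ ≤ ENNReal.ofReal ((C + σ.real univ / r₀ ^ γ) * r ^ γ) := by
        gcongr
        exact le_add_of_nonneg_left hC

-- On the `k`-th shell `k ≤ t|x - ω| < k + 1` the Gaussian is at most `e⁻ᵏ`.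
noncomputable def gaussianShellSum : ℝ := ∑' k : ℕ, ((k : ℝ) + 1) * exp (-k)

lemma summable_gaussianShellSum : Summable fun k : ℕ => ((k : ℝ) + 1) * exp (-k) := by
  have h := (summable_pow_mul_exp_neg_nat_mul 1 one_pos).add
    (summable_pow_mul_exp_neg_nat_mul 0 one_pos)
  simpa [add_mul] using h

lemma gaussianShellSum_pos : 0 < gaussianShellSum :=
  summable_gaussianShellSum.tsum_pos (fun _ => by positivity) 0 (by positivity)

lemma ofReal_exp_neg_sq_le_tsum_indicator {t : ℝ} (ht : 0 < t) (x ω : ℝ) :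
    ENNReal.ofReal (exp (-(t * (x - ω)) ^ 2)) ≤
      ∑' k : ℕ, (Icc (x - (k + 1) / t) (x + (k + 1) / t)).indicator
        (fun _ => ENNReal.ofReal (exp (-k))) ω := by
  set k := ⌊t * |x - ω|⌋₊
  have hk : (k : ℝ) ≤ t * |x - ω| := Nat.floor_le (by positivity)
  have hk' : t * |x - ω| < k + 1 := Nat.lt_floor_add_one _
  have hmem : ω ∈ Icc (x - (k + 1) / t) (x + (k + 1) / t) := by
    have : |x - ω| ≤ (k + 1) / t := by rw [le_div_iff₀ ht]; linarith
    constructor <;> linarith [abs_le.mp this, abs_sub_comm x ω]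
  have hexp : exp (-(t * (x - ω)) ^ 2) ≤ exp (-k) := by
    have hkk : (k : ℝ) ≤ (k : ℝ) ^ 2 := by exact_mod_cast Nat.le_self_pow two_ne_zero k
    have : (k : ℝ) ≤ (t * (x - ω)) ^ 2 := by
      rw [← sq_abs, abs_mul, abs_of_pos ht]
      nlinarith [k.cast_nonneg (α := ℝ)]
    exact exp_le_exp.mpr (by linarith)
  calc ENNReal.ofReal (exp (-(t * (x - ω)) ^ 2)) ≤ ENNReal.ofReal (exp (-k)) :=
        ENNReal.ofReal_le_ofReal hexp
    _ = (Icc (x - (k + 1) / t) (x + (k + 1) / t)).indicator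
          (fun _ => ENNReal.ofReal (exp (-k))) ω := by rw [indicator_of_mem hmem]
    _ ≤ _ := ENNReal.le_tsum k

lemma integral_exp_neg_sq_le_of_measure_Icc_le (σ : Measure ℝ) {C γ t x : ℝ} (hC : 0 ≤ C)
    (hγ : γ ≤ 1) (ht : 0 < t)
    (hreg : ∀ r, 0 < r → σ (Icc (x - r) (x + r)) ≤ ENNReal.ofReal (C * r ^ γ)) :
    ∫ ω, exp (-(t * (x - ω)) ^ 2) ∂σ ≤ C * gaussianShellSum / t ^ γ := by
  have htγ : 0 < t ^ γ := rpow_pos_of_pos ht γ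
  have hshell (k : ℕ) : ENNReal.ofReal (exp (-k)) * σ (Icc (x - (k + 1) / t) (x + (k + 1) / t)) ≤
      ENNReal.ofReal (C / t ^ γ * ((k + 1) * exp (-k))) := by
    have hpow : ((k + 1) / t) ^ γ ≤ (k + 1) / t ^ γ := by
      rw [div_rpow (by positivity) ht.le]
      gcongr
      calc ((k : ℝ) + 1) ^ γ ≤ ((k : ℝ) + 1) ^ (1 : ℝ) :=
            rpow_le_rpow_of_exponent_le (by linarith [k.cast_nonneg (α := ℝ)]) hγ
        _ = k + 1 := rpow_one _
    calc ENNReal.ofReal (exp (-k)) * σ (Icc (x - (k + 1) / t) (x + (k + 1) / t))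
        ≤ ENNReal.ofReal (exp (-k)) * ENNReal.ofReal (C * ((k + 1) / t) ^ γ) :=
          mul_le_mul_right (hreg _ (by positivity)) _
      _ = ENNReal.ofReal (exp (-k) * (C * ((k + 1) / t) ^ γ)) :=
          (ENNReal.ofReal_mul (exp_pos _).le).symm
      _ ≤ ENNReal.ofReal (C / t ^ γ * ((k + 1) * exp (-k))) := by
          apply ENNReal.ofReal_le_ofReal
          calc exp (-k) * (C * ((k + 1) / t) ^ γ) ≤ exp (-k) * (C * ((k + 1) / t ^ γ)) := by
                gcongr
            _ = C / t ^ γ * ((k + 1) * exp (-k)) := by ring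
  rw [integral_eq_lintegral_of_nonneg_ae (ae_of_all _ fun _ => (exp_pos _).le)
    (by fun_prop : Measurable fun ω => exp (-(t * (x - ω)) ^ 2)).aestronglyMeasurable]
  refine ENNReal.toReal_le_of_le_ofReal (by have := gaussianShellSum_pos; positivity) ?_
  calc ∫⁻ ω, ENNReal.ofReal (exp (-(t * (x - ω)) ^ 2)) ∂σ
      ≤ ∫⁻ ω, ∑' k : ℕ, (Icc (x - (k + 1) / t) (x + (k + 1) / t)).indicator
          (fun _ => ENNReal.ofReal (exp (-k))) ω ∂σ :=
        lintegral_mono (ofReal_exp_neg_sq_le_tsum_indicator ht x)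
    _ = ∑' k : ℕ, ENNReal.ofReal (exp (-k)) * σ (Icc (x - (k + 1) / t) (x + (k + 1) / t)) := by
        rw [lintegral_tsum fun k => (measurable_const.indicator measurableSet_Icc).aemeasurable]
        simp_rw [lintegral_indicator_const measurableSet_Icc]
    _ ≤ ∑' k : ℕ, ENNReal.ofReal (C / t ^ γ * ((k + 1) * exp (-k))) := ENNReal.tsum_le_tsum hshell
    _ = ENNReal.ofReal (C * gaussianShellSum / t ^ γ) := by
        rw [← ENNReal.ofReal_tsum_of_nonneg (fun k => by positivity)
          (summable_gaussianShellSum.mul_left _), tsum_mul_left, gaussianShellSum, mul_div_right_comm]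

lemma integral_prod_exp_neg_sq_sub_le (σ : Measure ℝ) [IsFiniteMeasure σ] {C γ t : ℝ}
    (hC : 0 ≤ C) (hγ : γ ≤ 1) (ht : 0 < t)
    (hreg : ∀ x r, 0 < r → σ (Icc (x - r) (x + r)) ≤ ENNReal.ofReal (C * r ^ γ)) :
    ∫ p, exp (-(t * (p.1 - p.2)) ^ 2) ∂σ.prod σ ≤ σ.real univ * (C * gaussianShellSum / t ^ γ) := by
  have hint : Integrable (fun p : ℝ × ℝ => exp (-(t * (p.1 - p.2)) ^ 2)) (σ.prod σ) :=
    Integrable.of_bound (by fun_prop) 1 (ae_of_all _ fun p => by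
      rw [norm_of_nonneg (exp_pos _).le, exp_le_one_iff, neg_nonpos]; positivity)
  rw [integral_prod _ hint]
  calc ∫ x, ∫ ω, exp (-(t * (x - ω)) ^ 2) ∂σ ∂σ ≤ ∫ _, C * gaussianShellSum / t ^ γ ∂σ :=
        integral_mono hint.integral_prod_left (integrable_const _) fun x =>
          integral_exp_neg_sq_le_of_measure_Icc_le σ hC hγ ht (hreg x)
    _ = σ.real univ * (C * gaussianShellSum / t ^ γ) := by rw [integral_const, smul_eq_mul]

lemma sq_norm_charFun_eq_integral_prod (σ : Measure ℝ) [IsFiniteMeasure σ] (t : ℝ) :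
    ((‖charFun σ t‖ ^ 2 : ℝ) : ℂ) = ∫ p, Complex.exp (t * (p.1 - p.2) * Complex.I) ∂σ.prod σ := by
  rw [Complex.ofReal_pow, ← Complex.mul_conj', ← charFun_neg, charFun_apply_real,
    charFun_apply_real, ← integral_prod_mul]
  congr 1 with p
  rw [← Complex.exp_add]
  congr 1
  push_cast
  ring

lemma integral_sq_norm_charFun_mul_le (σ : Measure ℝ) [IsFiniteMeasure σ] (c : ℝ) {g : ℝ → ℝ}
    (hg : Integrable g) :
    ∫ ζ, ‖charFun σ (c * ζ)‖ ^ 2 * g ζ ≤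
      ∫ p, ‖∫ ζ : ℝ, Complex.exp ((c * (p.1 - p.2) : ℝ) * ζ * Complex.I) * g ζ‖ ∂σ.prod σ := by
  set H : ℝ → ℝ × ℝ → ℂ := fun ζ p => Complex.exp ((c * (p.1 - p.2) : ℝ) * ζ * Complex.I) * g ζ
  have hH : Integrable (Function.uncurry H) (volume.prod (σ.prod σ)) := by
    have hg' : Integrable (fun q : ℝ × (ℝ × ℝ) => (g q.1 : ℂ)) (volume.prod (σ.prod σ)) :=
      (hg.ofReal (𝕜 := ℂ)).comp_fst (σ.prod σ)
    refine hg'.bdd_mul (c := 1) (by fun_prop) (ae_of_all _ fun q => ?_)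
    rw [← Complex.ofReal_mul, Complex.norm_exp_ofReal_mul_I]
  have hpoint (ζ : ℝ) : ‖charFun σ (c * ζ)‖ ^ 2 * g ζ = (∫ p, H ζ p ∂σ.prod σ).re := by
    have hsq : ∫ p, Complex.exp ((c * (p.1 - p.2) : ℝ) * ζ * Complex.I) ∂σ.prod σ =
        ((‖charFun σ (c * ζ)‖ ^ 2 : ℝ) : ℂ) := by
      rw [sq_norm_charFun_eq_integral_prod]
      congr 1 with p
      congr 1
      push_cast
      ring
    rw [integral_mul_const, hsq, ← Complex.ofReal_mul, Complex.ofReal_re]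
  calc ∫ ζ, ‖charFun σ (c * ζ)‖ ^ 2 * g ζ = (∫ ζ, ∫ p, H ζ p ∂σ.prod σ).re := by
        simp_rw [hpoint]; exact integral_re hH.integral_prod_left
    _ ≤ ‖∫ p, (∫ ζ, H ζ p) ∂σ.prod σ‖ := by
        rw [integral_integral_swap hH]; exact Complex.re_le_norm _
    _ ≤ _ := norm_integral_le_integral_norm _

lemma norm_integral_exp_mul_I_mul_gaussian (a y : ℝ) {R : ℝ} (hR : 0 < R) :
    ‖∫ ζ : ℝ, Complex.exp (a * ζ * Complex.I) * (exp (-((ζ - y) / R) ^ 2) : ℝ)‖ =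
      √π * R * exp (-(a * R / 2) ^ 2) := by
  set b : ℂ := (((R ^ 2)⁻¹ : ℝ) : ℂ)
  have hb : 0 < b.re := by simp only [b, Complex.ofReal_re]; positivity
  have hshift (x : ℝ) : Complex.exp (a * (x + y : ℝ) * Complex.I) *
      (exp (-((x + y - y) / R) ^ 2) : ℝ) =
      Complex.exp ((a * y : ℝ) * Complex.I) *
        (Complex.exp (Complex.I * a * x) * Complex.exp (-b * x ^ 2)) := by
    simp only [b, Complex.ofReal_exp, ← Complex.exp_add]
    congr 1
    push_cast
    field_simp
    ring
  have hπb : (π : ℂ) / b = ((π * R ^ 2 : ℝ) : ℂ) := by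
    simp only [b]; push_cast; field_simp
  have hexp : -(a : ℂ) ^ 2 / (4 * b) = ((-(a * R / 2) ^ 2 : ℝ) : ℂ) := by
    simp only [b]; push_cast; field_simp; ring
  rw [← integral_add_right_eq_self _ y]
  simp_rw [hshift]
  rw [integral_const_mul, fourierIntegral_gaussian hb, norm_mul, norm_mul,
    Complex.norm_exp_ofReal_mul_I, hπb, hexp, Complex.norm_exp_ofReal,
    Complex.norm_cpow_eq_rpow_re_of_pos (by positivity), one_mul, show (1 / 2 : ℂ).re = 1 / 2 by norm_num, ← sqrt_eq_rpow, sqrt_mul pi_pos.le,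
    sqrt_sq hR.le]

lemma setIntegral_Icc_le_exp_one_mul_integral_mul_gaussian {f : ℝ → ℝ} (hf : 0 ≤ f) (y : ℝ)
    {R : ℝ} (hR : 0 < R) (hfw : Integrable fun ζ => f ζ * exp (-((ζ - y) / R) ^ 2)) :
    ∫ ζ in Icc (y - R) (y + R), f ζ ≤ exp 1 * ∫ ζ, f ζ * exp (-((ζ - y) / R) ^ 2) := by
  have hweight : ∀ ζ ∈ Icc (y - R) (y + R), 1 ≤ exp 1 * exp (-((ζ - y) / R) ^ 2) := by
    rintro ζ ⟨hζ₁, hζ₂⟩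
    have : ((ζ - y) / R) ^ 2 ≤ 1 := by
      rw [div_pow, div_le_one (by positivity)]
      nlinarith
    rw [← exp_add]
    exact one_le_exp (by linarith)
  calc ∫ ζ in Icc (y - R) (y + R), f ζ
      ≤ ∫ ζ in Icc (y - R) (y + R), exp 1 * (f ζ * exp (-((ζ - y) / R) ^ 2)) := by
        refine integral_mono_of_nonneg (ae_of_all _ fun ζ => hf ζ)
          (hfw.const_mul _).integrableOn ?_
        filter_upwards [ae_restrict_mem measurableSet_Icc] with ζ hζ
        nlinarith [mul_le_mul_of_nonneg_left (hweight ζ hζ) (hf ζ)]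
    _ ≤ exp 1 * ∫ ζ, f ζ * exp (-((ζ - y) / R) ^ 2) := by
        rw [integral_const_mul]
        exact mul_le_mul_of_nonneg_left (setIntegral_le_integral hfw
          (ae_of_all _ fun ζ => mul_nonneg (hf ζ) (exp_pos _).le)) (exp_pos 1).le

theorem setIntegral_Icc_sq_norm_charFun_le (σ : Measure ℝ) [IsFiniteMeasure σ] {C γ : ℝ}
    (hC : 0 ≤ C) (hγ : γ ≤ 1)
    (hreg : ∀ x r, 0 < r → σ (Icc (x - r) (x + r)) ≤ ENNReal.ofReal (C * r ^ γ))
    (y : ℝ) {R : ℝ} (hR : 0 < R) :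
    ∫ ζ in Icc (y - R) (y + R), ‖charFun σ (2 * π * ζ)‖ ^ 2 ≤
      exp 1 * √π * σ.real univ * C * gaussianShellSum / π ^ γ * R ^ (1 - γ) := by
  set w : ℝ → ℝ := fun ζ => exp (-((ζ - y) / R) ^ 2)
  have hw : Integrable w :=
    ((integrable_exp_neg_mul_sq (inv_pos.2 (pow_pos hR 2))).comp_sub_right y).congr
      (ae_of_all _ fun ζ => by simp only [w]; congr 1; field_simp)
  have hFw : Integrable fun ζ => ‖charFun σ (2 * π * ζ)‖ ^ 2 * w ζ :=
    hw.bdd_mul (c := σ.real univ ^ 2) (by fun_prop) (ae_of_all _ fun ζ => by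
      rw [norm_pow, norm_norm]; gcongr; exact norm_charFun_le _)
  calc ∫ ζ in Icc (y - R) (y + R), ‖charFun σ (2 * π * ζ)‖ ^ 2
      ≤ exp 1 * ∫ ζ, ‖charFun σ (2 * π * ζ)‖ ^ 2 * w ζ :=
        setIntegral_Icc_le_exp_one_mul_integral_mul_gaussian (fun _ => by positivity) y hR hFw
    _ ≤ exp 1 * ∫ p, ‖∫ ζ : ℝ, Complex.exp ((2 * π * (p.1 - p.2) : ℝ) * ζ * Complex.I) * w ζ‖
          ∂σ.prod σ := by
        gcongr
        exact integral_sq_norm_charFun_mul_le σ (2 * π) hw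
    _ = exp 1 * (√π * R * ∫ p, exp (-(π * R * (p.1 - p.2)) ^ 2) ∂σ.prod σ) := by
        congr 1
        rw [← integral_const_mul]
        apply integral_congr_ae
        filter_upwards with p
        rw [norm_integral_exp_mul_I_mul_gaussian _ _ hR]
        congr 3
        ring
    _ ≤ exp 1 * (√π * R * (σ.real univ * (C * gaussianShellSum / (π * R) ^ γ))) := by
        gcongr
        exact integral_prod_exp_neg_sq_sub_le σ hC hγ (by positivity) hreg
    _ = exp 1 * √π * σ.real univ * C * gaussianShellSum / π ^ γ * R ^ (1 - γ) := by
        rw [mul_rpow pi_pos.le hR.le, rpow_sub hR, rpow_one]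
        field_simp

/-- Strichartz-type estimate: uniform local Hölder regularity of a finite measure implies
averaged decay of the square of its Fourier transform on intervals of length `2R`. -/
theorem stmt1 (σ : Measure ℝ) [IsFiniteMeasure σ]
    (C γ r₀ : ℝ) (hC : 0 < C) (hγ : 0 < γ ∧ γ ≤ 1) (hr₀ : 0 < r₀)
    (hreg : ∀ ω : ℝ, ∀ r : ℝ, 0 < r → r ≤ r₀ →
      σ (Icc (ω - r) (ω + r)) ≤ ENNReal.ofReal (C * r ^ γ)) :
    ∃ C' : ℝ, 0 < C' ∧ ∀ y R : ℝ, 1 ≤ R →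
      ∫ ζ in Icc (y - R) (y + R),
        ‖∫ ω : ℝ, Complex.exp (2 * Real.pi * Complex.I * ω * ζ) ∂σ‖ ^ 2
        ≤ C' * R ^ (1 - γ) := by
  obtain ⟨hγ₀, hγ₁⟩ := hγ
  obtain ⟨C₂, hC₂, hreg₂⟩ := exists_measure_Icc_le_mul_rpow σ hC.le hγ₀.le hr₀ hreg
  set A := exp 1 * √π * σ.real univ * C₂ * gaussianShellSum / π ^ γ
  have hA : 0 ≤ A := by have := gaussianShellSum_pos; positivity
  refine ⟨A + 1, by positivity, fun y R hR => ?_⟩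
  have hcharFun (ζ : ℝ) : ∫ ω : ℝ, Complex.exp (2 * π * Complex.I * ω * ζ) ∂σ =
      charFun σ (2 * π * ζ) := by
    rw [charFun_apply_real]
    congr 1 with ω
    congr 1
    push_cast
    ring
  simp_rw [hcharFun]
  calc ∫ ζ in Icc (y - R) (y + R), ‖charFun σ (2 * π * ζ)‖ ^ 2 ≤ A * R ^ (1 - γ) :=
        setIntegral_Icc_sq_norm_charFun_le σ hC₂ hγ₁ hreg₂ y (by positivity)
    _ ≤ (A + 1) * R ^ (1 - γ) := by gcongr; linarith
end

section
/- In the setting of the Erdős–Kahane recursion: let M = Θ·Diag(θ_j)·Θ^{−1} be a real matrix with operator norm ‖M‖_∞ = θ₁‖Θ‖_∞‖Θ^{−1}‖_∞ bound, set ρ = (1/2)(1 + θ₁‖Θ‖_∞‖Θ^{−1}‖_∞)^{−1} and L = 2 + θ₁‖Θ‖_∞‖Θ^{−1}‖_∞. If integers K_n,…,K_{n+m} and reals ε_n,…,ε_{n+m} with |ε_i| ≤ 1/2 satisfy K⃗_{n+1} + ε⃗_{n+1} = M(K⃗_n + ε⃗_n), then: (i) if max{|ε_n|,…,|ε_{n+m}|}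 < ρ, then K_{n+m} is uniquely determined by K_n,…,K_{n+m−1}; (ii) in general, given K_n,…,K_{n+m−1}, there are at most L possibilities for the integer K_{n+m}. -/
open Matrix

/-- Lemma 4.6 of Bufetov–Solomyak (Erdős–Kahane step): with
`ρ = (1/2)(1 + ‖M‖)⁻¹` and `L = 2 + ‖M‖`, (i) if all errors are `< ρ` then `K_{n+m}` is
uniquely determined by `K_n,…,K_{n+m-1}`; (ii) in general there are at most `L`
possibilities for `K_{n+m}`. -/
theorem stmt7 (m : ℕ) (hm : 0 < m) (M : Matrix (Fin m) (Fin m) ℝ)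
    (CM : ℝ) (hCM : 0 ≤ CM)
    (hMnorm : ∀ x : Fin m → ℝ, ‖M.mulVec x‖ ≤ CM * ‖x‖)
    (n : ℕ) :
    -- (i) uniqueness when all errors are smaller than ρ = (1/2)(1+CM)⁻¹
    (∀ (K K' : ℕ → ℤ) (ε ε' : ℕ → ℝ),
      ((fun i : Fin m => (K (n + 1 + i) : ℝ) + ε (n + 1 + i))
        = M.mulVec (fun i : Fin m => (K (n + i) : ℝ) + ε (n + i))) →
      ((fun i : Fin m => (K' (n + 1 + i) : ℝ) + ε' (n + 1 + i))
        = M.mulVec (fun i : Fin m => (K' (n + i) : ℝ) + ε' (n + i))) →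
      (∀ i ≤ m, |ε (n + i)| < (1/2) * (1 + CM)⁻¹ ∧ |ε' (n + i)| < (1/2) * (1 + CM)⁻¹) →
      (∀ i < m, K (n + i) = K' (n + i)) →
      K (n + m) = K' (n + m)) ∧
    -- (ii) at most L = 2 + CM possibilities for K_{n+m} in general
    (∀ K : ℕ → ℤ, ∃ s : Finset ℤ, (s.card : ℝ) ≤ 2 + CM ∧
      ∀ (K' : ℕ → ℤ) (ε' : ℕ → ℝ),
        (∀ i ≤ m, |ε' (n + i)| ≤ 1/2) →
        (∀ i < m, K' (n + i) = K (n + i)) →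
        ((fun i : Fin m => (K' (n + 1 + i) : ℝ) + ε' (n + 1 + i))
          = M.mulVec (fun i : Fin m => (K' (n + i) : ℝ) + ε' (n + i))) →
        K' (n + m) ∈ s) := by
  have hpos : (0:ℝ) < 1 + CM := by linarith
  have hinv : (1 + CM) * (1 + CM)⁻¹ = 1 := mul_inv_cancel₀ hpos.ne'
  set i0 : Fin m := ⟨m - 1, Nat.sub_lt hm one_pos⟩ with hi0
  have hlast : n + 1 + (i0 : ℕ) = n + m := by
    simp only [hi0]; omega
  constructor
  · intro K K' ε ε' hK hK' hε hKK
    set v : Fin m → ℝ := fun i => (K (n + i) : ℝ) + ε (n + i) with hv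
    set v' : Fin m → ℝ := fun i => (K' (n + i) : ℝ) + ε' (n + i) with hv'
    have h1 := congrFun hK i0
    have h1' := congrFun hK' i0
    simp only [hlast] at h1 h1'
    have hδ : ‖v - v'‖ ≤ (1 + CM)⁻¹ := by
      refine (pi_norm_le_iff_of_nonneg (by positivity)).mpr fun i => ?_
      have hk2 := hKK i i.isLt
      have he1 := (hε i i.isLt.le).1
      have he2 := (hε i i.isLt.le).2
      have : (v - v') i = ε (n + i) - ε' (n + i) := by
        simp only [Pi.sub_apply, hv, hv', hk2]; ring
      rw [Real.norm_eq_abs, this]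
      have := abs_sub (ε (n + i)) (ε' (n + i))
      calc |ε (n + i) - ε' (n + i)| ≤ |ε (n + i)| + |ε' (n + i)| := abs_sub _ _
        _ ≤ (1/2) * (1 + CM)⁻¹ + (1/2) * (1 + CM)⁻¹ := by linarith
        _ = (1 + CM)⁻¹ := by ring
    have hcomp : |(M.mulVec (v - v')) i0| ≤ CM * (1 + CM)⁻¹ := by
      calc |(M.mulVec (v - v')) i0| = ‖(M.mulVec (v - v')) i0‖ := (Real.norm_eq_abs _).symm
        _ ≤ ‖M.mulVec (v - v')‖ := norm_le_pi_norm _ i0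
        _ ≤ CM * ‖v - v'‖ := hMnorm _
        _ ≤ CM * (1 + CM)⁻¹ := by
            exact mul_le_mul_of_nonneg_left hδ hCM
    rw [Matrix.mulVec_sub] at hcomp
    have hdiff : (M.mulVec v - M.mulVec v') i0
        = ((K (n + m) : ℝ) + ε (n + m)) - ((K' (n + m) : ℝ) + ε' (n + m)) := by
      simp [← h1, ← h1']
    rw [hdiff] at hcomp
    have he1 := (hε m le_rfl).1
    have he2 := (hε m le_rfl).2
    have habs : |(K (n + m) : ℝ) - (K' (n + m) : ℝ)| < 1 := by
      have h3 : |(K (n + m) : ℝ) - (K' (n + m) : ℝ)|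
          ≤ |((K (n + m) : ℝ) + ε (n + m)) - ((K' (n + m) : ℝ) + ε' (n + m))|
            + |ε (n + m)| + |ε' (n + m)| := by
        have h4 : (K (n + m) : ℝ) - (K' (n + m) : ℝ)
            = (((K (n + m) : ℝ) + ε (n + m)) - ((K' (n + m) : ℝ) + ε' (n + m)))
              + (ε' (n + m) - ε (n + m)) := by ring
        rw [h4]
        have ha := abs_add_le (((K (n + m) : ℝ) + ε (n + m)) - ((K' (n + m) : ℝ) + ε' (n + m)))
          (ε' (n + m) - ε (n + m))
        have hb : |ε' (n + m) - ε (n + m)| ≤ |ε' (n + m)| + |ε (n + m)| := abs_sub _ _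
        linarith
      have : |(K (n + m) : ℝ) - (K' (n + m) : ℝ)|
          < CM * (1 + CM)⁻¹ + (1/2) * (1 + CM)⁻¹ + (1/2) * (1 + CM)⁻¹ := by linarith
      calc |(K (n + m) : ℝ) - (K' (n + m) : ℝ)| < _ := this
        _ = (1 + CM) * (1 + CM)⁻¹ := by ring
        _ = 1 := hinv
    have hZ : |K (n + m) - K' (n + m)| < 1 := by exact_mod_cast habs
    have := abs_lt.mp hZ
    omega
  · intro K
    set c : ℝ := (M.mulVec (fun i : Fin m => (K (n + i) : ℝ))) i0 with hc
    refine ⟨Finset.Icc ⌈c - CM/2 - 1/2⌉ ⌊c + CM/2 + 1/2⌋, ?_, ?_⟩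
    · rw [Int.card_Icc]
      have h1 : (⌊c + CM/2 + 1/2⌋ : ℝ) ≤ c + CM/2 + 1/2 := Int.floor_le _
      have h2 : c - CM/2 - 1/2 ≤ (⌈c - CM/2 - 1/2⌉ : ℝ) := Int.le_ceil _
      rcases le_or_gt (⌊c + CM/2 + 1/2⌋ + 1 - ⌈c - CM/2 - 1/2⌉) 0 with h | h
      · rw [Int.toNat_of_nonpos h]; push_cast; linarith
      · have hx : (((⌊c + CM/2 + 1/2⌋ + 1 - ⌈c - CM/2 - 1/2⌉).toNat : ℕ) : ℝ)
            = ((⌊c + CM/2 + 1/2⌋ : ℝ) + 1 - (⌈c - CM/2 - 1/2⌉ : ℝ)) := by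
          rw [← Int.cast_natCast, Int.toNat_of_nonneg h.le]
          push_cast; ring
        rw [hx]; linarith
    · intro K' ε' hε' hKK hEq
      have h1 := congrFun hEq i0
      simp only [hlast] at h1
      set e : Fin m → ℝ := fun i => ε' (n + i) with he
      have hvdecomp : (fun i : Fin m => (K' (n + i) : ℝ) + ε' (n + i))
          = (fun i : Fin m => (K (n + i) : ℝ)) + e := by
        funext i
        simp [he, hKK i i.isLt]
      rw [hvdecomp, Matrix.mulVec_add] at h1
      have hne : ‖e‖ ≤ 1/2 := by
        refine (pi_norm_le_iff_of_nonneg (by norm_num)).mpr fun i => ?_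
        rw [Real.norm_eq_abs]
        exact hε' i i.isLt.le
      have hcomp : |(M.mulVec e) i0| ≤ CM * (1/2) := by
        calc |(M.mulVec e) i0| = ‖(M.mulVec e) i0‖ := (Real.norm_eq_abs _).symm
          _ ≤ ‖M.mulVec e‖ := norm_le_pi_norm _ i0
          _ ≤ CM * ‖e‖ := hMnorm _
          _ ≤ CM * (1/2) := mul_le_mul_of_nonneg_left hne hCM
      have heps := hε' m le_rfl
      have hub : (K' (n + m) : ℝ) ≤ c + CM/2 + 1/2 := by
        have := abs_le.mp hcomp
        have := abs_le.mp heps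
        have h2 : (K' (n + m) : ℝ) = c + (M.mulVec e) i0 - ε' (n + m) := by
          have := h1
          simp only [Pi.add_apply] at this
          linarith [this]
        rw [h2]
        simp only [Pi.add_apply] at *
        linarith [(abs_le.mp hcomp).2, (abs_le.mp heps).1]
      have hlb : c - CM/2 - 1/2 ≤ (K' (n + m) : ℝ) := by
        have h2 : (K' (n + m) : ℝ) = c + (M.mulVec e) i0 - ε' (n + m) := by
          have := h1
          simp only [Pi.add_apply] at this
          linarith [this]
        rw [h2]
        linarith [(abs_le.mp hcomp).1, (abs_le.mp heps).2]
      rw [Finset.mem_Icc]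
      exact ⟨Int.ceil_le.mpr hlb, Int.le_floor.mpr hub⟩
end

section
/- Let E ⊂ ℝ^d be a set such that for every η ∈ (0,1) satisfying a given inequality (namely η log λ / 2 > quantity depending on k), E admits, for every N₀, a cover by at most A·B^{m+1}·e^{cN} balls of radius D·λ^{−N} for each N ≥ N₀ and each integer B ≥ 2 (summed over B and N ≥ N₀ + ⌊Υ log B⌋), where c < η log λ / 2 and Υ η log λ / 2 > m + 2. Then the η-dimensional Hausdorff measure of E is zero, hence dim_H(E) ≤ η. -/
/-!
For every `N₀` the given balls cover `E`, and a ball at level `(B, N)` contributes at most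
`(2Dλ^{-N})^η` to the `η`-sum. With `a = η log λ - c`, the `η`-sum of the cover is at most
`∑_B A (2D)^η B^{m+1} ∑_{N ≥ N₀ + ⌊Υ log B⌋} e^{-aN}`
`  = e^{-aN₀} (1 - e^{-a})⁻¹ ∑_B A (2D)^η B^{m+1} e^{-a⌊Υ log B⌋}`.
As `c < η log λ / 2` we have `a > η log λ / 2`, hence `aΥ > m + 2`, and since
`e^{-a⌊Υ log B⌋} ≤ e^a B^{-aΥ}` the series over `B` converges. So the `η`-sums tend to `0` as
`N₀ → ∞`.
-/

open MeasureTheory Set Filter Topology Metric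
open scoped ENNReal NNReal

theorem Metric.ediam_closedBall_le_ofReal {X : Type*} [PseudoMetricSpace X] (x : X) (r : ℝ) :
    ediam (closedBall x r) ≤ ENNReal.ofReal (2 * r) :=
  ediam_le_of_forall_dist_le fun y hy z hz => by
    linarith [dist_triangle_right y z x, mem_closedBall.1 hy, mem_closedBall.1 hz]

section HausdorffMeasure

variable {X : Type*} [MeasurableSpace X] {η : ℝ}

/-- No bound on the diameters is needed: as `η > 0`, each diameter is at most the `η`-th root of
the whole `η`-sum. -/
theorem MeasureTheory.Measure.hausdorffMeasure_eq_zero_of_tendsto_tsum [EMetricSpace X]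
    [BorelSpace X] {E : Set X} (hη : 0 < η) {ι : ℕ → Type*} [∀ n, Countable (ι n)]
    (U : ∀ n, ι n → Set X) (hcover : ∀ n, E ⊆ ⋃ i, U n i)
    (hsum : Tendsto (fun n => ∑' i, ediam (U n i) ^ η) atTop (𝓝 0)) : μH[η] E = 0 := by
  set S := fun n => ∑' i, ediam (U n i) ^ η
  have hdiam : ∀ n i, ediam (U n i) ≤ S n ^ η⁻¹ := fun n i => calc
    ediam (U n i) = (ediam (U n i) ^ η) ^ η⁻¹ := by
      rw [← ENNReal.rpow_mul, mul_inv_cancel₀ hη.ne', ENNReal.rpow_one]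
    _ ≤ S n ^ η⁻¹ := ENNReal.rpow_le_rpow (ENNReal.le_tsum i) (inv_nonneg.2 hη.le)
  have hS : Tendsto (fun n => S n ^ η⁻¹) atTop (𝓝 0) := by
    have := ((ENNReal.continuous_rpow_const (y := η⁻¹)).tendsto 0).comp hsum
    rwa [ENNReal.zero_rpow_of_pos (inv_pos.2 hη)] at this
  refine le_antisymm ?_ zero_le
  calc μH[η] E ≤ liminf S atTop :=
        hausdorffMeasure_le_liminf_tsum η E _ hS U (.of_forall hdiam) (.of_forall hcover)
    _ = 0 := hsum.liminf_eq

theorem MeasureTheory.Measure.hausdorffMeasure_eq_zero_of_tendsto_tsum_card_mul [MetricSpace X]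
    [BorelSpace X] {E : Set X} (hη : 0 < η) {κ : Type*} [Countable κ] (s : ℕ → κ → Finset X)
    (r : κ → ℝ) (hcover : ∀ n, E ⊆ ⋃ k, ⋃ x ∈ s n k, closedBall x (r k))
    (hsum : Tendsto (fun n => ∑' k, (s n k).card * ENNReal.ofReal (2 * r k) ^ η) atTop (𝓝 0)) :
    μH[η] E = 0 := by
  refine hausdorffMeasure_eq_zero_of_tendsto_tsum hη (ι := fun n => Σ k, s n k)
    (fun _ i => closedBall (i.2 : X) (r i.1)) (fun n z hz => ?_)
    (tendsto_of_tendsto_of_tendsto_of_le_of_le tendsto_const_nhds hsum (fun _ => zero_le)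
      fun n => ?_)
  · obtain ⟨k, x, hx, hzx⟩ : ∃ k, ∃ x ∈ s n k, z ∈ closedBall x (r k) := by
      simpa using hcover n hz
    exact mem_iUnion.2 ⟨⟨k, x, hx⟩, hzx⟩
  · calc ∑' i : Σ k, s n k, ediam (closedBall (i.2 : X) (r i.1)) ^ η
        ≤ ∑' i : Σ k, s n k, ENNReal.ofReal (2 * r i.1) ^ η :=
          ENNReal.tsum_le_tsum fun i =>
            ENNReal.rpow_le_rpow (ediam_closedBall_le_ofReal _ _) hη.le
      _ = ∑' k, (s n k).card * ENNReal.ofReal (2 * r k) ^ η := by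
          simp [ENNReal.tsum_sigma']

theorem dimH_le_ofReal_of_hausdorffMeasure_ne_top [EMetricSpace X] [BorelSpace X] {E : Set X}
    (hη : 0 ≤ η) (h : μH[η] E ≠ ∞) : dimH E ≤ ENNReal.ofReal η := by
  lift η to ℝ≥0 using hη
  simpa using dimH_le_of_hausdorffMeasure_ne_top h

end HausdorffMeasure

theorem ENNReal.tsum_ite_le_pow (Q : ℝ≥0∞) (K : ℕ) :
    ∑' N : ℕ, (if K ≤ N then Q ^ N else 0) = Q ^ K * (1 - Q)⁻¹ := by
  rw [← ENNReal.summable.sum_add_tsum_nat_add' (k := K),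
    Finset.sum_eq_zero fun N hN => if_neg (by simpa using hN), zero_add]
  simp_rw [if_pos (Nat.le_add_left K _), pow_add, ENNReal.tsum_mul_right, ENNReal.tsum_geometric,
    mul_comm]

theorem ENNReal.tendsto_tsum_tsum_ite_pow {Q : ℝ≥0∞} (hQ : Q < 1) (w : ℕ → ℝ≥0∞) (M : ℕ → ℕ)
    (hw : ∑' B, w B * Q ^ M B ≠ ∞) :
    Tendsto (fun n => ∑' B, ∑' N, if n + M B ≤ N then w B * Q ^ N else 0) atTop (𝓝 0) := by
  have hsum : ∀ n, ∑' B, ∑' N, (if n + M B ≤ N then w B * Q ^ N else 0) =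
      ((1 - Q)⁻¹ * ∑' B, w B * Q ^ M B) * Q ^ n := fun n => calc
    _ = ∑' B, w B * (Q ^ (n + M B) * (1 - Q)⁻¹) := tsum_congr fun B => by
        simp_rw [← mul_ite_zero]
        rw [ENNReal.tsum_mul_left, ENNReal.tsum_ite_le_pow]
    _ = ∑' B, ((1 - Q)⁻¹ * Q ^ n) * (w B * Q ^ M B) := tsum_congr fun B => by ring
    _ = _ := by rw [ENNReal.tsum_mul_left]; ring
  have hC : (1 - Q)⁻¹ * ∑' B, w B * Q ^ M B ≠ ∞ :=
    ENNReal.mul_ne_top (ENNReal.inv_ne_top.2 (tsub_pos_of_lt hQ).ne') hw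
  simpa [hsum, mul_comm] using
    ENNReal.Tendsto.const_mul (ENNReal.tendsto_pow_atTop_nhds_zero_of_lt_one hQ) (.inr hC)

theorem Real.pow_mul_exp_neg_mul_floor_le {a : ℝ} (ha : 0 ≤ a) (Υ : ℝ) {k : ℕ} (hk : k ≠ 0)
    (B : ℕ) : (B : ℝ) ^ k * exp (-a) ^ ⌊Υ * log B⌋₊ ≤ exp a * (B : ℝ) ^ ((k : ℝ) - a * Υ) := by
  rcases B.eq_zero_or_pos with rfl | hB
  · simp [hk]; positivity
  have hB : (0 : ℝ) < B := by exact_mod_cast hB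
  have hfloor := Nat.sub_one_lt_floor (Υ * log B)
  calc (B : ℝ) ^ k * exp (-a) ^ ⌊Υ * log B⌋₊ = (B : ℝ) ^ k * exp (-(a * ⌊Υ * log B⌋₊)) := by
        rw [← exp_nat_mul]; ring_nf
    _ ≤ (B : ℝ) ^ k * exp (a - a * Υ * log B) := by gcongr; nlinarith
    _ = exp a * (B : ℝ) ^ ((k : ℝ) - a * Υ) := by
        rw [rpow_sub hB, rpow_natCast, rpow_def_of_pos hB, exp_sub, mul_comm (log _)]; ring

theorem Real.summable_pow_mul_exp_neg_mul_floor {a Υ : ℝ} (ha : 0 ≤ a) {k : ℕ} (hk : k ≠ 0)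
    (h : (k : ℝ) + 1 < a * Υ) : Summable fun B : ℕ => (B : ℝ) ^ k * exp (-a) ^ ⌊Υ * log B⌋₊ :=
  .of_nonneg_of_le (fun _ => by positivity) (pow_mul_exp_neg_mul_floor_le ha Υ hk)
    ((summable_nat_rpow.2 (by linarith)).mul_left (exp a))

theorem ENNReal.tsum_ofReal_mul_pow_mul_exp_neg_pow_floor_ne_top (C : ℝ) {a Υ : ℝ} (ha : 0 ≤ a)
    {k : ℕ} (hk : k ≠ 0) (h : (k : ℝ) + 1 < a * Υ) :
    ∑' B : ℕ, ENNReal.ofReal (C * B ^ k) * ENNReal.ofReal (Real.exp (-a)) ^ ⌊Υ * Real.log B⌋₊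
      ≠ ∞ := by
  convert ((Real.summable_pow_mul_exp_neg_mul_floor ha hk h).mul_left C).tsum_ofReal_ne_top
    using 3 with B
  rw [← ENNReal.ofReal_pow (by positivity), ← ENNReal.ofReal_mul' (by positivity), mul_assoc]

theorem Real.two_mul_mul_rpow_neg_rpow_mul_exp {lam D : ℝ} (hlam : 0 < lam) (hD : 0 ≤ D)
    (c η : ℝ) (N : ℕ) :
    (2 * (D * lam ^ (-(N : ℝ)))) ^ η * exp (c * N) =
      (2 * D) ^ η * exp (-(η * log lam - c)) ^ N := by
  rw [← mul_assoc, mul_rpow (by positivity) (by positivity), ← rpow_mul hlam.le,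
    rpow_def_of_pos hlam, ← exp_nat_mul, mul_assoc, ← exp_add]
  ring_nf

theorem ENNReal.natCast_mul_ofReal_two_mul_rpow_le {n N : ℕ} {C c D lam η : ℝ}
    (hn : (n : ℝ) ≤ C * Real.exp (c * N)) (hlam : 0 < lam) (hD : 0 ≤ D) (hη : 0 ≤ η) :
    n * ENNReal.ofReal (2 * (D * lam ^ (-(N : ℝ)))) ^ η ≤
      ENNReal.ofReal (C * (2 * D) ^ η) * ENNReal.ofReal (Real.exp (-(η * Real.log lam - c))) ^ N :=
  calc n * ENNReal.ofReal (2 * (D * lam ^ (-(N : ℝ)))) ^ η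
      = ENNReal.ofReal n * ENNReal.ofReal ((2 * (D * lam ^ (-(N : ℝ)))) ^ η) := by
        rw [ENNReal.ofReal_natCast, ENNReal.ofReal_rpow_of_nonneg (by positivity) hη]
    _ ≤ ENNReal.ofReal (C * Real.exp (c * N)) *
          ENNReal.ofReal ((2 * (D * lam ^ (-(N : ℝ)))) ^ η) := by gcongr
    _ = ENNReal.ofReal (C * (2 * D) ^ η * Real.exp (-(η * Real.log lam - c)) ^ N) := by
        rw [← ENNReal.ofReal_mul' (by positivity), mul_assoc, mul_comm (Real.exp _),
          Real.two_mul_mul_rpow_neg_rpow_mul_exp hlam hD, mul_assoc]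
    _ = _ := by
        rw [ENNReal.ofReal_mul' (by positivity), ENNReal.ofReal_pow (by positivity)]

theorem stmt9_general (d m : ℕ) (E : Set (EuclideanSpace ℝ (Fin d)))
    (lam A D c Υ η : ℝ) (hlam : 1 < lam) (hD : 0 < D)
    (hΥ : 0 < Υ) (hη : 0 < η ∧ η < 1)
    (hcη : c < η * Real.log lam / 2)
    (hΥη : (m : ℝ) + 2 < Υ * η * Real.log lam / 2)
    (hcover : ∀ N₀ : ℕ, ∃ t : ℕ → ℕ → Finset (EuclideanSpace ℝ (Fin d)),
      (∀ B N : ℕ, ((t B N).card : ℝ) ≤ A * (B : ℝ) ^ (m + 1) * Real.exp (c * N)) ∧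
      E ⊆ ⋃ B : ℕ, ⋃ (_ : 2 ≤ B), ⋃ N : ℕ,
            ⋃ (_ : N₀ + ⌊Υ * Real.log B⌋₊ ≤ N), ⋃ x ∈ t B N,
              Metric.closedBall x (D * lam ^ (-(N : ℝ)))) :
    μH[η] E = 0 ∧ dimH E ≤ ENNReal.ofReal η := by
  set a := η * Real.log lam - c
  have hL : 0 < η * Real.log lam := mul_pos hη.1 (Real.log_pos hlam)
  have ha : 0 < a := by linarith
  have haΥ : ((m + 1 : ℕ) : ℝ) + 1 < a * Υ := by push_cast; nlinarith
  set Q := ENNReal.ofReal (Real.exp (-a))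
  have hQ : Q < 1 := ENNReal.ofReal_lt_one.2 (Real.exp_lt_one_iff.2 (neg_lt_zero.2 ha))
  set M : ℕ → ℕ := fun B => ⌊Υ * Real.log B⌋₊
  set w : ℕ → ℝ≥0∞ := fun B => ENNReal.ofReal (A * (2 * D) ^ η * B ^ (m + 1))
  have hw : ∑' B, w B * Q ^ M B ≠ ∞ :=
    ENNReal.tsum_ofReal_mul_pow_mul_exp_neg_pow_floor_ne_top _ ha.le m.add_one_ne_zero haΥ
  choose T hTcard hTcover using hcover
  have hμ : μH[η] E = 0 := by
    refine Measure.hausdorffMeasure_eq_zero_of_tendsto_tsum_card_mul hη.1 (κ := ℕ × ℕ)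
      (fun n k => if 2 ≤ k.1 ∧ n + M k.1 ≤ k.2 then T n k.1 k.2 else ∅)
      (fun k => D * lam ^ (-(k.2 : ℝ))) (fun n z hz => ?_)
      (tendsto_of_tendsto_of_tendsto_of_le_of_le tendsto_const_nhds
        (ENNReal.tendsto_tsum_tsum_ite_pow hQ w M hw) (fun _ => zero_le) fun n => ?_)
    · obtain ⟨B, hB, N, hN, x, hx, hzx⟩ := by
        simpa only [mem_iUnion, exists_prop] using hTcover n hz
      simp only [mem_iUnion]
      exact ⟨(B, N), x, by simp [hB, hN, hx, M], hzx⟩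
    · rw [ENNReal.tsum_prod']
      refine ENNReal.tsum_le_tsum fun B => ENNReal.tsum_le_tsum fun N => ?_
      split_ifs with h h'
      · exact (ENNReal.natCast_mul_ofReal_two_mul_rpow_le (hTcard n B N) (by linarith) hD.le
          hη.1.le).trans_eq (by rw [mul_right_comm])
      · exact absurd h.2 h'
      all_goals simp
  exact ⟨hμ, dimH_le_ofReal_of_hausdorffMeasure_ne_top hη.1.le (by simp [hμ])⟩

/-- Covering estimate implying vanishing Hausdorff measure and a dimension bound. -/
theorem stmt9 (d m : ℕ) (E : Set (EuclideanSpace ℝ (Fin d)))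
    (lam A D c Υ η : ℝ) (hlam : 1 < lam) (hA : 0 < A) (hD : 0 < D) (hc : 0 < c)
    (hΥ : 0 < Υ) (hη : 0 < η ∧ η < 1)
    (hcη : c < η * Real.log lam / 2)
    (hΥη : (m : ℝ) + 2 < Υ * η * Real.log lam / 2)
    (hcover : ∀ N₀ : ℕ, ∃ t : ℕ → ℕ → Finset (EuclideanSpace ℝ (Fin d)),
      (∀ B N : ℕ, ((t B N).card : ℝ) ≤ A * (B : ℝ) ^ (m + 1) * Real.exp (c * N)) ∧
      E ⊆ ⋃ B : ℕ, ⋃ (_ : 2 ≤ B), ⋃ N : ℕ,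
            ⋃ (_ : N₀ + ⌊Υ * Real.log B⌋₊ ≤ N), ⋃ x ∈ t B N,
              Metric.closedBall x (D * lam ^ (-(N : ℝ)))) :
    μH[η] E = 0 ∧ dimH E ≤ ENNReal.ofReal η :=
  stmt9_general d m E lam A D c Υ η hlam hD hΥ hη hcη hΥη hcover
end

section
/- Suppose the spectral measure σ_f of a flow satisfies: (a) σ_f([−r, r]) ≤ C₁ r^{2−2β̃} for all r > 0 with β̃ ∈ (0,1); and (b) σ_f([ω−r, ω+r]) ≤ C₂ r^{γ̃} whenever ω ≠ 0 and 0 < r ≤ r₀|ω|^Z, with Z ≥ 1, γ̃ > 0, r₀ ∈ (0,1]. Then there exist constants C > 0 and γ = min{γ̃, (2−2β̃)/Z} > 0 such that σ_f([ω−r, ω+r]) ≤ C r^γ for all ω ∈ ℝ and all 0 < r ≤ r₀. -/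
open MeasureTheory Set

/-- Gluing the Hölder bound at zero with the Hölder bound away from zero gives a uniform
local Hölder bound on the whole line, with exponent `γ = min{γ̃, (2−2β̃)/Z}`. -/
theorem stmt14 (σ : Measure ℝ) [IsFiniteMeasure σ]
    (C₁ C₂ βt γt Z r₀ : ℝ)
    (hC₁ : 0 < C₁) (hC₂ : 0 < C₂) (hβ : 0 < βt ∧ βt < 1) (hγt : 0 < γt)
    (hZ : 1 ≤ Z) (hr₀ : 0 < r₀ ∧ r₀ ≤ 1)
    (hzero : ∀ r : ℝ, 0 < r → σ (Icc (-r) r) ≤ ENNReal.ofReal (C₁ * r ^ (2 - 2*βt)))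
    (haway : ∀ ω : ℝ, ω ≠ 0 → ∀ r : ℝ, 0 < r → r ≤ r₀ * |ω| ^ Z →
      σ (Icc (ω - r) (ω + r)) ≤ ENNReal.ofReal (C₂ * r ^ γt)) :
    ∃ C : ℝ, 0 < C ∧ ∀ ω r : ℝ, 0 < r → r ≤ r₀ →
      σ (Icc (ω - r) (ω + r))
        ≤ ENNReal.ofReal (C * r ^ (min γt ((2 - 2*βt) / Z))) := by
  obtain ⟨hβ0, hβ1⟩ := hβ
  obtain ⟨hr₀0, hr₀1⟩ := hr₀
  have hZ0 : (0:ℝ) < Z := lt_of_lt_of_le one_pos hZ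
  have he : (0:ℝ) < 2 - 2*βt := by linarith
  set K : ℝ := r₀ ^ (-(1/Z)) + 1 with hK
  have hK0 : 0 < K := by positivity
  set γ : ℝ := min γt ((2 - 2*βt) / Z) with hγ
  have hγ0 : 0 < γ := lt_min hγt (by positivity)
  refine ⟨max C₂ (C₁ * K ^ (2 - 2*βt)), lt_max_of_lt_left hC₂, ?_⟩
  intro ω r hr hrr₀
  have hr1 : r ≤ 1 := hrr₀.trans hr₀1
  have hrγ0 : 0 < r ^ γ := Real.rpow_pos_of_pos hr γ
  by_cases hcase : ω ≠ 0 ∧ r ≤ r₀ * |ω| ^ Z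
  · obtain ⟨hω, hrω⟩ := hcase
    calc σ (Icc (ω - r) (ω + r)) ≤ ENNReal.ofReal (C₂ * r ^ γt) :=
          haway ω hω r hr hrω
      _ ≤ ENNReal.ofReal (max C₂ (C₁ * K ^ (2 - 2*βt)) * r ^ γ) := by
          apply ENNReal.ofReal_le_ofReal
          have h1 : r ^ γt ≤ r ^ γ :=
            Real.rpow_le_rpow_of_exponent_ge hr hr1 (min_le_left _ _)
          calc C₂ * r ^ γt ≤ C₂ * r ^ γ :=
                mul_le_mul_of_nonneg_left h1 hC₂.le
            _ ≤ max C₂ (C₁ * K ^ (2 - 2*βt)) * r ^ γ :=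
                mul_le_mul_of_nonneg_right (le_max_left _ _) hrγ0.le
  · -- zero case: r₀ * |ω|^Z < r
    have hlt : r₀ * |ω| ^ Z < r := by
      rcases not_and_or.mp hcase with h | h
      · push_neg at h
        simp [h, Real.zero_rpow hZ0.ne', hr]
      · linarith [not_le.mp h]
    have hωb : |ω| ≤ (r / r₀) ^ (1/Z) := by
      have h1 : |ω| ^ Z ≤ r / r₀ := by
        rw [le_div_iff₀ hr₀0]; nlinarith
      calc |ω| = (|ω| ^ Z) ^ (1/Z) := by
            rw [one_div, Real.rpow_rpow_inv (abs_nonneg ω) hZ0.ne']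
        _ ≤ (r / r₀) ^ (1/Z) :=
            Real.rpow_le_rpow (Real.rpow_nonneg (abs_nonneg ω) Z) h1 (by positivity)
    have hdiv : (r / r₀) ^ (1/Z) = r ^ (1/Z) * r₀ ^ (-(1/Z)) := by
      rw [div_eq_mul_inv, Real.mul_rpow hr.le (by positivity),
        ← Real.rpow_neg_one r₀, ← Real.rpow_mul hr₀0.le]
      congr 1
      ring
    have hrle : r ≤ r ^ (1/Z) := by
      have : r ^ (1:ℝ) ≤ r ^ (1/Z) := by
        apply Real.rpow_le_rpow_of_exponent_ge hr hr1
        rw [div_le_one hZ0]; exact hZ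
      simpa using this
    have hR : |ω| + r ≤ K * r ^ (1/Z) := by
      have := hωb
      rw [hdiv] at this
      have h1 : 0 < r ^ (1/Z) := Real.rpow_pos_of_pos hr _
      calc |ω| + r ≤ r ^ (1/Z) * r₀ ^ (-(1/Z)) + r ^ (1/Z) := by linarith
        _ = K * r ^ (1/Z) := by ring
    have hsub : Icc (ω - r) (ω + r) ⊆ Icc (-(|ω| + r)) (|ω| + r) := by
      apply Icc_subset_Icc
      · cases abs_cases ω with
        | inl h => linarith [h.1]
        | inr h => linarith [h.1]
      · cases abs_cases ω with
        | inl h => linarith [h.1]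
        | inr h => linarith [h.1]
    have hRpos : 0 < |ω| + r := by positivity
    calc σ (Icc (ω - r) (ω + r)) ≤ σ (Icc (-(|ω| + r)) (|ω| + r)) := measure_mono hsub
      _ ≤ ENNReal.ofReal (C₁ * (|ω| + r) ^ (2 - 2*βt)) := hzero _ hRpos
      _ ≤ ENNReal.ofReal (max C₂ (C₁ * K ^ (2 - 2*βt)) * r ^ γ) := by
          apply ENNReal.ofReal_le_ofReal
          have h1 : (|ω| + r) ^ (2 - 2*βt) ≤ (K * r ^ (1/Z)) ^ (2 - 2*βt) :=
            Real.rpow_le_rpow hRpos.le hR he.le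
          have h2 : (K * r ^ (1/Z)) ^ (2 - 2*βt)
              = K ^ (2 - 2*βt) * r ^ ((2 - 2*βt)/Z) := by
            rw [Real.mul_rpow hK0.le (Real.rpow_nonneg hr.le _),
              ← Real.rpow_mul hr.le]
            congr 1
            ring
          have h3 : r ^ ((2 - 2*βt)/Z) ≤ r ^ γ :=
            Real.rpow_le_rpow_of_exponent_ge hr hr1 (min_le_right _ _)
          have hKe : 0 < K ^ (2 - 2*βt) := Real.rpow_pos_of_pos hK0 _
          calc C₁ * (|ω| + r) ^ (2 - 2*βt)
              ≤ C₁ * (K ^ (2 - 2*βt) * r ^ ((2 - 2*βt)/Z)) := by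
                rw [← h2]; exact mul_le_mul_of_nonneg_left h1 hC₁.le
            _ ≤ C₁ * (K ^ (2 - 2*βt) * r ^ γ) := by
                apply mul_le_mul_of_nonneg_left _ hC₁.le
                exact mul_le_mul_of_nonneg_left h3 hKe.le
            _ = (C₁ * K ^ (2 - 2*βt)) * r ^ γ := by ring
            _ ≤ max C₂ (C₁ * K ^ (2 - 2*βt)) * r ^ γ :=
                mul_le_mul_of_nonneg_right (le_max_right _ _) hrγ0.le
end
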